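/- arXiv:1011.0524 — 2 statements merged into one kernel-verified Lean document; each statement's English description precedes it below -/
import Mathlib

section
/- Dobinski's formula: for every natural number n, B(n) = (1/e) \sum_{k=0}^\infty k^n / k!. -/
/-- The Bell number `B(n)`: the number of partitions of an `n`-element set. -/
noncomputable def bell (n : ℕ) : ℕ := Nat.card (Finpartition (Finset.univ : Finset (Fin n)))

/-!
Sorting the partitions of `insert a s` by the block containing `a` gives the recurrence
`B(n + 1) = ∑ₘ (n choose m) B(n - m)`. The sums `D(n) = ∑ₖ kⁿ / k!` satisfy the same recurrence,
since `(k + 1)ⁿ⁺¹ / (k + 1)! = (k + 1)ⁿ / k!` and `(k + 1)ⁿ` expands binomially, and `D(0) = e`.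
Hence `D(n) = e B(n)`.
-/

open Finset Nat

namespace Finpartition

section GeneralizedBooleanAlgebra

variable {α : Type*} [GeneralizedBooleanAlgebra α] {a b c : α}

lemma not_le_and_sdiff_eq_of_disjoint (hc : c ≠ ⊥) (hcb : Disjoint c b) : ¬c ≤ b ∧ c \ b = c :=
  ⟨fun h => hc (hcb.eq_bot_of_le h), hcb.sdiff_eq_left⟩

variable [DecidableEq α]

def subtypeMemPartsEquiv (hb : b ≠ ⊥) (hba : b ≤ a) :
    {P : Finpartition a // b ∈ P.parts} ≃ Finpartition (a \ b) where
  toFun P := P.1.avoid b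
  invFun Q := ⟨Q.extend hb disjoint_sdiff_self_left (sdiff_sup_cancel hba), mem_insert_self _ _⟩
  left_inv := by
    rintro ⟨P, hP⟩
    ext c
    simp only [extend_parts, mem_insert, mem_avoid]
    constructor
    · rintro (rfl | ⟨d, hd, hdb, rfl⟩)
      · exact hP
      · have hne : d ≠ b := by rintro rfl; exact hdb le_rfl
        have hdisj : Disjoint d b := P.disjoint hd hP hne
        rwa [hdisj.sdiff_eq_left]
    · intro hc
      by_cases hcb : c = b
      · exact Or.inl hcb
      · exact Or.inr ⟨c, hc, not_le_and_sdiff_eq_of_disjoint (P.ne_bot hc) (P.disjoint hc hP hcb)⟩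
  right_inv Q := by
    have hdisj {d : α} (hd : d ∈ Q.parts) : Disjoint d b :=
      disjoint_sdiff_self_left.mono_left (Q.le hd)
    ext c
    simp only [mem_avoid, extend_parts, mem_insert]
    constructor
    · rintro ⟨d, rfl | hd, hdb, rfl⟩
      · exact absurd le_rfl hdb
      · rwa [(hdisj hd).sdiff_eq_left]
    · intro hc
      exact ⟨c, Or.inr hc, not_le_and_sdiff_eq_of_disjoint (Q.ne_bot hc) (hdisj hc)⟩

end GeneralizedBooleanAlgebra

variable {ι : Type*} [DecidableEq ι]

lemma natCard_empty : Nat.card (Finpartition (∅ : Finset ι)) = 1 :=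
  Nat.card_unique (α := Finpartition (⊥ : Finset ι))

lemma erase_part_eq_iff {a : ι} {s t : Finset ι} (P : Finpartition (insert a s)) (hat : a ∉ t) :
    (P.part a).erase a = t ↔ insert a t ∈ P.parts := by
  have haP : a ∈ P.part a := P.mem_part_self.2 (mem_insert_self a s)
  constructor
  · rintro rfl
    rw [insert_erase haP]
    exact P.part_mem.2 (mem_insert_self a s)
  · intro ht
    rw [P.part_eq_of_mem ht (mem_insert_self a t), erase_insert hat]

lemma natCard_insert {a : ι} {s : Finset ι} (ha : a ∉ s) :
    Nat.card (Finpartition (insert a s)) = ∑ t ∈ s.powerset, Nat.card (Finpartition (s \ t)) := by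
  have hmaps : ∀ P : Finpartition (insert a s), (P.part a).erase a ∈ s.powerset := by
    intro P
    refine mem_powerset.2 fun x hx => ?_
    obtain ⟨hxa, hx⟩ := mem_erase.1 hx
    exact (mem_insert.1 (P.part_subset a hx)).resolve_left hxa
  rw [Nat.card_eq_fintype_card, ← Finset.card_univ,
    card_eq_sum_card_fiberwise fun P _ => hmaps P]
  refine sum_congr rfl fun t ht => ?_
  have hat : a ∉ t := fun h => ha (mem_powerset.1 ht h)
  calc #{P : Finpartition (insert a s) | (P.part a).erase a = t}
      = Nat.card {P : Finpartition (insert a s) // insert a t ∈ P.parts} := by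
        rw [Nat.card_eq_fintype_card, Fintype.card_subtype]
        simp only [erase_part_eq_iff _ hat]
    _ = Nat.card (Finpartition (insert a s \ insert a t)) :=
        Nat.card_congr (subtypeMemPartsEquiv (insert_ne_empty a t)
          (insert_subset_insert a (mem_powerset.1 ht)))
    _ = Nat.card (Finpartition (s \ t)) := by
        rw [insert_sdiff_insert, sdiff_insert_of_notMem ha]

end Finpartition

section Dobinski

open Real

lemma summable_natCast_pow_div_factorial (n : ℕ) : Summable fun k : ℕ => (k : ℝ) ^ n / k ! := by
  refine Summable.of_nonneg_of_le (fun k => by positivity) (fun k => ?_)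
    ((summable_pow_div_factorial (exp 1)).mul_left (n ! : ℝ))
  have hk : (k : ℝ) ^ n ≤ n ! * exp k := by
    have := pow_div_factorial_le_exp (k : ℝ) k.cast_nonneg n
    rwa [div_le_iff₀ (by positivity), mul_comm] at this
  rw [exp_one_pow, mul_div_assoc']
  gcongr

lemma tsum_natCast_pow_zero_div_factorial : ∑' k : ℕ, (k : ℝ) ^ 0 / k ! = exp 1 := by
  simpa [exp_eq_exp_ℝ] using (NormedSpace.expSeries_div_hasSum_exp (1 : ℝ)).tsum_eq

lemma natCast_succ_pow_succ_div_factorial (n k : ℕ) :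
    ((k + 1 : ℕ) : ℝ) ^ (n + 1) / (k + 1)! =
      ∑ m ∈ range (n + 1), n.choose m * ((k : ℝ) ^ (n - m) / k !) := by
  rw [factorial_succ, cast_mul, _root_.pow_succ', mul_div_mul_left _ _ (by positivity),
    cast_add_one, add_comm, add_pow, sum_div]
  exact sum_congr rfl fun m _ => by ring

lemma tsum_natCast_pow_succ_div_factorial (n : ℕ) :
    ∑' k : ℕ, (k : ℝ) ^ (n + 1) / k ! =
      ∑ m ∈ range (n + 1), n.choose m * ∑' k : ℕ, (k : ℝ) ^ (n - m) / k ! := by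
  rw [(summable_natCast_pow_div_factorial (n + 1)).tsum_eq_zero_add, cast_zero,
    zero_pow (succ_ne_zero n), zero_div, zero_add,
    tsum_congr (natCast_succ_pow_succ_div_factorial n),
    Summable.tsum_finsetSum fun m _ => (summable_natCast_pow_div_factorial _).mul_left _]
  simp_rw [tsum_mul_left]

theorem Finpartition.natCard_mul_exp_one {ι : Type*} [DecidableEq ι] (s : Finset ι) :
    Nat.card (Finpartition s) * exp 1 = ∑' k : ℕ, (k : ℝ) ^ #s / k ! := by
  induction s using Finset.strongInduction with
  | H s ih =>
  obtain rfl | ⟨a, ha⟩ := s.eq_empty_or_nonempty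
  · rw [natCard_empty, card_empty, tsum_natCast_pow_zero_div_factorial, cast_one, one_mul]
  set t := s.erase a
  have hat : a ∉ t := notMem_erase a s
  rw [← insert_erase ha]
  calc (Nat.card (Finpartition (insert a t)) : ℝ) * exp 1
      = ∑ u ∈ t.powerset, Nat.card (Finpartition (t \ u)) * exp 1 := by
        rw [natCard_insert hat, cast_sum, sum_mul]
    _ = ∑ u ∈ t.powerset, ∑' k : ℕ, (k : ℝ) ^ (#t - #u) / k ! := by
        refine sum_congr rfl fun u hu => ?_
        rw [ih _ (sdiff_subset.trans_ssubset (erase_ssubset ha)),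
          card_sdiff_of_subset (mem_powerset.1 hu)]
    _ = ∑ m ∈ range (#t + 1), (#t).choose m * ∑' k : ℕ, (k : ℝ) ^ (#t - m) / k ! := by
        simp_rw [sum_powerset_apply_card (fun m => ∑' k : ℕ, (k : ℝ) ^ (#t - m) / k !),
          nsmul_eq_mul]
    _ = ∑' k : ℕ, (k : ℝ) ^ #(insert a t) / k ! := by
        rw [card_insert_of_notMem hat, tsum_natCast_pow_succ_div_factorial]

end Dobinski

/-- Dobinski's formula: B(n) = (1/e) ∑_{k=0}^∞ kⁿ/k!. -/
theorem dobinski (n : ℕ) :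
    (bell n : ℝ) = (1 / Real.exp 1) * ∑' k : ℕ, (k : ℝ) ^ n / (k.factorial : ℝ) := by
  have h := Finpartition.natCard_mul_exp_one (univ : Finset (Fin n))
  rw [Finset.card_univ, Fintype.card_fin] at h
  rw [bell, ← h]
  field_simp
end

section
/- Dobinski's formula for Bell polynomials: for every natural number n and real y, B_n(y) = e^{-y} \sum_{k=0}^\infty (k^n/k!) y^k. -/
/-- The Stirling number of the second kind `S(n,k)`: the number of partitions of an
`n`-element set into exactly `k` nonempty blocks. -/
noncomputable def stirling (n k : ℕ) : ℕ :=
  Nat.card {P : Finpartition (Finset.univ : Finset (Fin n)) // P.parts.card = k}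

/-- The Bell polynomial `B_n(y) = ∑_{k=0}^n S(n,k) yᵏ`. -/
noncomputable def bellPoly (n : ℕ) (y : ℝ) : ℝ :=
  ∑ k ∈ Finset.range (n + 1), (stirling n k : ℝ) * y ^ k

/-!
Sorting the maps `Fin n → Fin k` by the partition of `Fin n` into their fibres gives
`kⁿ = ∑ⱼ S(n,j) k(k-1)⋯(k-j+1)`, since the maps with a given `j`-block partition correspond to
injections of its blocks into `Fin k`. Dividing by `k!`, multiplying by `yᵏ` and summing over `k`,
each falling factorial contributes `∑ₖ k(k-1)⋯(k-j+1) yᵏ/k! = yʲ eʸ`, so the series is `eʸ Bₙ(y)`.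
-/

open Finset Function

namespace Finpartition

variable {α : Type*} [DecidableEq α] {s : Finset α}

theorem parts_eq_image_part (P : Finpartition s) : P.parts = s.image P.part := by
  ext t
  rw [mem_image]
  exact ⟨fun ht ↦ P.part_surjOn ht, fun ⟨a, ha, hat⟩ ↦ hat ▸ P.part_mem.2 ha⟩

theorem ext_part {P Q : Finpartition s} (h : ∀ a ∈ s, P.part a = Q.part a) : P = Q :=
  Finpartition.ext <| by rw [parts_eq_image_part, parts_eq_image_part, image_congr h]

theorem ofSetoid_eq_iff [Fintype α] {r : Setoid α} [DecidableRel r.r]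
    {P : Finpartition (univ : Finset α)} :
    ofSetoid r = P ↔ ∀ a b, r a b ↔ P.part a = P.part b := by
  constructor
  · rintro rfl a b
    rw [← mem_part_ofSetoid_iff_rel, (ofSetoid r).mem_part_iff_part_eq_part (mem_univ _)
      (mem_univ _), eq_comm]
  · refine fun h ↦ ext_part fun a _ ↦ ?_
    ext b
    rw [mem_part_ofSetoid_iff_rel, h, P.mem_part_iff_part_eq_part (mem_univ b) (mem_univ a),
      eq_comm]

end Finpartition

noncomputable def Function.Surjective.kerEquivEmbedding {α β γ : Type*} {π : α → γ}
    (hπ : Surjective π) : {f : α → β // ∀ a b, f a = f b ↔ π a = π b} ≃ (γ ↪ β) where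
  toFun f := ⟨f.1 ∘ surjInv hπ, fun p q h ↦ by
    simpa only [surjInv_eq] using (f.2 (surjInv hπ p) (surjInv hπ q)).1 h⟩
  invFun g := ⟨g ∘ π, fun _ _ ↦ g.injective.eq_iff⟩
  left_inv f := Subtype.ext <| funext fun a ↦ (f.2 _ a).2 (surjInv_eq hπ (π a))
  right_inv g := Embedding.ext fun c ↦ congrArg g (surjInv_eq hπ c)

theorem Finpartition.card_ofSetoid_ker_eq {α β : Type*} [Fintype α] [DecidableEq α] [Fintype β]
    [DecidableEq β] (P : Finpartition (univ : Finset α)) :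
    Fintype.card {f : α → β // ofSetoid (Setoid.ker f) = P} =
      (Fintype.card β).descFactorial #P.parts := by
  let π (a : α) : P.parts := ⟨P.part a, P.part_mem.2 (mem_univ a)⟩
  have hπ : Surjective π := fun ⟨t, ht⟩ ↦
    let ⟨a, _, hat⟩ := P.part_surjOn ht
    ⟨a, Subtype.ext hat⟩
  have hfib (f : α → β) : ofSetoid (Setoid.ker f) = P ↔ ∀ a b, f a = f b ↔ π a = π b := by
    simp only [ofSetoid_eq_iff, Setoid.ker_def, π, Subtype.ext_iff]
  rw [Fintype.card_congr ((Equiv.subtypeEquivRight hfib).trans hπ.kerEquivEmbedding),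
    Fintype.card_embedding_eq, Fintype.card_coe]

theorem card_pow_card_eq_sum_card_finpartition (α β : Type*) [Fintype α] [DecidableEq α]
    [Fintype β] [DecidableEq β] :
    Fintype.card β ^ Fintype.card α = ∑ j ∈ range (Fintype.card α + 1),
      Nat.card {P : Finpartition (univ : Finset α) // #P.parts = j} *
        (Fintype.card β).descFactorial j := by
  have hparts (P : Finpartition (univ : Finset α)) : #P.parts ∈ range (Fintype.card α + 1) :=
    mem_range_succ_iff.2 P.card_parts_le_card
  calc Fintype.card β ^ Fintype.card α
      = ∑ P : Finpartition (univ : Finset α),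
          Fintype.card {f : α → β // Finpartition.ofSetoid (Setoid.ker f) = P} := by
        rw [← Fintype.card_fun, ← Fintype.card_sigma]
        exact Fintype.card_congr (Equiv.sigmaFiberEquiv _).symm
    _ = ∑ P : Finpartition (univ : Finset α), (Fintype.card β).descFactorial #P.parts := by
        simp only [Finpartition.card_ofSetoid_ker_eq]
    _ = ∑ j ∈ range (Fintype.card α + 1),
          ∑ P : Finpartition (univ : Finset α) with #P.parts = j,
            (Fintype.card β).descFactorial #P.parts :=
        (sum_fiberwise_of_maps_to (fun P _ ↦ hparts P) _).symm
    _ = _ := by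
        refine sum_congr rfl fun j _ ↦ ?_
        rw [sum_congr rfl fun P hP ↦ by rw [(mem_filter.1 hP).2], sum_const, smul_eq_mul,
          Nat.card_eq_fintype_card, Fintype.card_subtype]

theorem pow_eq_sum_stirling_mul_descFactorial (n k : ℕ) :
    k ^ n = ∑ j ∈ range (n + 1), stirling n j * k.descFactorial j := by
  simpa [stirling] using card_pow_card_eq_sum_card_finpartition (Fin n) (Fin k)

theorem hasSum_descFactorial_div_factorial_mul_pow {𝔸 : Type*} [NormedField 𝔸]
    [NormedAlgebra ℚ 𝔸] [CompleteSpace 𝔸] (j : ℕ) (x : 𝔸) :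
    HasSum (fun k : ℕ ↦ (k.descFactorial j : 𝔸) / k.factorial * x ^ k)
      (x ^ j * NormedSpace.exp x) := by
  have hhead : ∑ k ∈ range j, (k.descFactorial j : 𝔸) / k.factorial * x ^ k = 0 :=
    sum_eq_zero fun k hk ↦ by simp [Nat.descFactorial_eq_zero_iff_lt.2 (mem_range.1 hk)]
  rw [← hasSum_nat_add_iff' j, hhead, sub_zero]
  refine ((NormedSpace.expSeries_div_hasSum_exp x).mul_left (x ^ j)).congr_fun fun m ↦ ?_
  have := algebraRat.charZero 𝔸
  have hfact : (m.factorial * (m + j).descFactorial j : 𝔸) = (m + j).factorial := by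
    have := Nat.factorial_mul_descFactorial (Nat.le_add_left j m)
    rw [Nat.add_sub_cancel] at this
    exact_mod_cast this
  have hm : (m.factorial : 𝔸) ≠ 0 := Nat.cast_ne_zero.2 m.factorial_ne_zero
  have hd : ((m + j).descFactorial j : 𝔸) ≠ 0 :=
    Nat.cast_ne_zero.2 (Nat.descFactorial_pos.2 (Nat.le_add_left j m)).ne'
  rw [← hfact, pow_add]
  field_simp

theorem hasSum_pow_div_factorial_mul_pow (n : ℕ) (y : ℝ) :
    HasSum (fun k : ℕ ↦ (k : ℝ) ^ n / k.factorial * y ^ k) (Real.exp y * bellPoly n y) := by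
  have hsum := hasSum_sum fun j (_ : j ∈ range (n + 1)) ↦
    (hasSum_descFactorial_div_factorial_mul_pow j y).mul_left (stirling n j : ℝ)
  have hval : ∑ j ∈ range (n + 1), (stirling n j : ℝ) * (y ^ j * NormedSpace.exp y) =
      Real.exp y * bellPoly n y := by
    rw [bellPoly, mul_sum, Real.exp_eq_exp_ℝ]
    exact sum_congr rfl fun j _ ↦ by ring
  refine hval ▸ hsum.congr_fun fun k ↦ ?_
  rw [← Nat.cast_pow, pow_eq_sum_stirling_mul_descFactorial]
  push_cast
  rw [sum_div, sum_mul]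
  exact sum_congr rfl fun j _ ↦ by ring

/-- Dobinski for Bell polynomials: B_n(y) = e^{-y} ∑_{k=0}^∞ (kⁿ/k!) yᵏ. -/
theorem dobinski_poly (n : ℕ) (y : ℝ) :
    bellPoly n y = Real.exp (-y) * ∑' k : ℕ, (k : ℝ) ^ n / (k.factorial : ℝ) * y ^ k := by
  rw [(hasSum_pow_div_factorial_mul_pow n y).tsum_eq, ← mul_assoc, ← Real.exp_add,
    neg_add_cancel, Real.exp_zero, one_mul]
end
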